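/- With the logarithmic polynomials R_p^k defined recursively as above, one has R_p^{±(p−2)}(x) = p/2^p + (p(p−1)/2^{p−1})·x² for all p ≥ 2. -/

import Mathlib

/-- The logarithmic polynomials `R_p^k`. -/
noncomputable def logPoly : ℕ → ℤ → ℝ → ℝ
  | 0, k, _ => if k = 0 then 1 else 0
  | p + 1, k, x =>
      (1 / 2) * logPoly p (k - 1) x + x * logPoly p k x + (1 / 2) * logPoly p (k + 1) x

/-! Since `R_p^k` vanishes for `|k| > p`, the recurrence along each of the three outermost
diagonals `k = p`, `k = p - 1`, `k = p - 2` only involves the diagonals above it, and these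
are solved one after the other by induction on `p`. -/

lemma logPoly_succ (p : ℕ) (k : ℤ) (x : ℝ) : logPoly (p + 1) k x =
    1 / 2 * logPoly p (k - 1) x + x * logPoly p k x + 1 / 2 * logPoly p (k + 1) x := rfl

lemma logPoly_neg (p : ℕ) (k : ℤ) (x : ℝ) : logPoly p (-k) x = logPoly p k x := by
  induction p generalizing k with
  | zero => simp [logPoly]
  | succ p ih =>
    rw [logPoly_succ, logPoly_succ, show -k - 1 = -(k + 1) by ring,
      show -k + 1 = -(k - 1) by ring, ih, ih, ih]
    ring

lemma logPoly_eq_zero_of_lt_natAbs {p : ℕ} {k : ℤ} (h : p < k.natAbs) (x : ℝ) :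
    logPoly p k x = 0 := by
  induction p generalizing k with
  | zero => simp [logPoly, Int.natAbs_pos.mp h]
  | succ p ih =>
    rw [logPoly_succ, ih (by omega), ih (by omega), ih (by omega)]
    ring

lemma logPoly_self (p : ℕ) (x : ℝ) : logPoly p p x = 1 / 2 ^ p := by
  induction p with
  | zero => simp [logPoly]
  | succ p ih =>
    rw [logPoly_succ, Nat.cast_succ, add_sub_cancel_right, ih,
      logPoly_eq_zero_of_lt_natAbs (by omega), logPoly_eq_zero_of_lt_natAbs (by omega)]
    ring

lemma logPoly_succ_self (p : ℕ) (x : ℝ) : logPoly (p + 1) p x = (p + 1) * x / 2 ^ p := by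
  induction p with
  | zero => simp [logPoly]
  | succ p ih =>
    have h := logPoly_self (p + 1) x
    push_cast at h
    rw [logPoly_succ, Nat.cast_succ, add_sub_cancel_right, ih, h,
      logPoly_eq_zero_of_lt_natAbs (by omega)]
    push_cast
    ring

lemma logPoly_add_two_self (p : ℕ) (x : ℝ) :
    logPoly (p + 2) p x = (p + 2) / 2 ^ (p + 2) + ((p + 2) * (p + 1) / 2 ^ (p + 1)) * x ^ 2 := by
  induction p with
  | zero => norm_num [logPoly_succ, logPoly]; ring
  | succ p ih =>
    have h₁ := logPoly_succ_self (p + 1) x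
    have h₂ := logPoly_self (p + 2) x
    push_cast at h₁ h₂
    rw [logPoly_succ, Nat.cast_succ, add_sub_cancel_right, ih, h₁,
      show (p : ℤ) + 1 + 1 = p + 2 by ring, h₂]
    push_cast
    ring

theorem logPoly_sub_two (p : ℕ) (hp : 2 ≤ p) (x : ℝ) :
    logPoly p ((p : ℤ) - 2) x = p / 2 ^ p + (p * (p - 1) / 2 ^ (p - 1)) * x ^ 2 ∧
    logPoly p (-((p : ℤ) - 2)) x = p / 2 ^ p + (p * (p - 1) / 2 ^ (p - 1)) * x ^ 2 := by
  obtain ⟨n, rfl⟩ := Nat.exists_eq_add_of_le' hp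
  rw [show ((n + 2 : ℕ) : ℤ) - 2 = n by push_cast; ring, logPoly_neg, and_self,
    logPoly_add_two_self, show n + 2 - 1 = n + 1 from rfl]
  push_cast
  ring
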